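/- arXiv:2602.02117 — 4 statements merged into one kernel-verified Lean document; each statement's English description precedes it below -/
import Mathlib

section
/- Let E and F be finite-dimensional real inner product spaces, let Γ ⊆ E and Q ⊆ F be nonempty, convex, compact sets, and let L : E × F → ℝ be continuous on Γ × Q, affine in its first argument on Γ and convex in its second argument on Q. Then there exists a saddle point (ρ*, q*) ∈ Γ × Q such that L(ρ, q*) ≤ L(ρ*, q*) ≤ L(ρ*, q) for all ρ ∈ Γ and all q ∈ Q. -/
/-! Sion's minimax theorem, applied to `(q, ρ) ↦ L ρ q` minimised over `Q` and maximised over `Γ`: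
this function is continuous and convex (so quasiconvex) in `q`, and continuous and affine
(so concave, hence quasiconcave) in `ρ`. -/

theorem concaveOn_of_map_convex_combination_eq {E : Type*} [AddCommGroup E] [Module ℝ E]
    {s : Set E} {g : E → ℝ} (hs : Convex ℝ s)
    (hg : ∀ t ∈ Set.Icc (0 : ℝ) 1, ∀ x ∈ s, ∀ y ∈ s,
      g (t • x + (1 - t) • y) = t * g x + (1 - t) * g y) :
    ConcaveOn ℝ s g := by
  refine ⟨hs, fun x hx y hy a b ha hb hab => ?_⟩
  obtain rfl : b = 1 - a := by linarith
  exact (hg a ⟨ha, by linarith⟩ x hx y hy).ge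

theorem saddle_point_exists_general
    {E F : Type*} [NormedAddCommGroup E] [InnerProductSpace ℝ E]
    [NormedAddCommGroup F] [InnerProductSpace ℝ F]
    (Γ : Set E) (Q : Set F)
    (hΓne : Γ.Nonempty) (hΓconv : Convex ℝ Γ) (hΓcomp : IsCompact Γ)
    (hQne : Q.Nonempty) (hQconv : Convex ℝ Q) (hQcomp : IsCompact Q)
    (L : E → F → ℝ)
    (hcont : ContinuousOn (fun p : E × F => L p.1 p.2) (Γ ×ˢ Q))
    (haff : ∀ t : ℝ, t ∈ Set.Icc (0:ℝ) 1 → ∀ ρ ∈ Γ, ∀ ρ' ∈ Γ, ∀ q ∈ Q,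
      L (t • ρ + (1 - t) • ρ') q = t * L ρ q + (1 - t) * L ρ' q)
    (hconv : ∀ ρ ∈ Γ, ConvexOn ℝ Q (L ρ)) :
    ∃ ρs ∈ Γ, ∃ qs ∈ Q,
      (∀ ρ ∈ Γ, L ρ qs ≤ L ρs qs) ∧ (∀ q ∈ Q, L ρs qs ≤ L ρs q) := by
  have hconcave : ∀ q ∈ Q, ConcaveOn ℝ Γ (L · q) := fun q hq =>
    concaveOn_of_map_convex_combination_eq hΓconv fun t ht ρ hρ ρ' hρ' =>
      haff t ht ρ hρ ρ' hρ' q hq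
  obtain ⟨qs, hqs, ρs, hρs, hsaddle⟩ :=
    Sion.exists_isSaddlePointOn (f := fun q ρ => L ρ q) hQne hQconv hQcomp
      (fun ρ hρ => (hcont.uncurry_left ρ hρ).lowerSemicontinuousOn)
      (fun ρ hρ => (hconv ρ hρ).quasiconvexOn) hΓconv hΓne hΓcomp
      (fun q hq => (hcont.uncurry_right q hq).upperSemicontinuousOn)
      (fun q hq => (hconcave q hq).quasiconcaveOn)
  exact ⟨ρs, hρs, qs, hqs, fun ρ hρ => hsaddle qs hqs ρ hρ, fun q hq => hsaddle q hq ρs hρs⟩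

/-- Existence of a saddle point for losses affine in the first argument and
convex in the second, over nonempty convex compact sets in finite-dimensional real inner
product spaces. -/
theorem saddle_point_exists
    {E F : Type*} [NormedAddCommGroup E] [InnerProductSpace ℝ E] [FiniteDimensional ℝ E]
    [NormedAddCommGroup F] [InnerProductSpace ℝ F] [FiniteDimensional ℝ F]
    (Γ : Set E) (Q : Set F)
    (hΓne : Γ.Nonempty) (hΓconv : Convex ℝ Γ) (hΓcomp : IsCompact Γ)
    (hQne : Q.Nonempty) (hQconv : Convex ℝ Q) (hQcomp : IsCompact Q)
    (L : E → F → ℝ)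
    (hcont : ContinuousOn (fun p : E × F => L p.1 p.2) (Γ ×ˢ Q))
    (haff : ∀ t : ℝ, t ∈ Set.Icc (0:ℝ) 1 → ∀ ρ ∈ Γ, ∀ ρ' ∈ Γ, ∀ q ∈ Q,
      L (t • ρ + (1 - t) • ρ') q = t * L ρ q + (1 - t) * L ρ' q)
    (hconv : ∀ ρ ∈ Γ, ConvexOn ℝ Q (L ρ)) :
    ∃ ρs ∈ Γ, ∃ qs ∈ Q,
      (∀ ρ ∈ Γ, L ρ qs ≤ L ρs qs) ∧ (∀ q ∈ Q, L ρs qs ≤ L ρs q) :=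
  saddle_point_exists_general Γ Q hΓne hΓconv hΓcomp hQne hQconv hQcomp L hcont haff hconv
end

section
/- Let ρ and σ be n×n real symmetric positive semidefinite matrices with trace 1 (density matrices), with σ positive definite. Then the quantum relative entropy satisfies D(ρ‖σ) := Tr(ρ log ρ) − Tr(ρ log σ) ≥ 0, with equality if and only if ρ = σ (Klein's inequality). -/
open Matrix

/-- The matrix logarithm of a real symmetric matrix, defined by applying `Real.log` to
the eigenvalues in a spectral decomposition (junk value `0` for non-Hermitian input). -/
noncomputable def matLog {n : ℕ} (A : Matrix (Fin n) (Fin n) ℝ) :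
    Matrix (Fin n) (Fin n) ℝ :=
  if h : A.IsHermitian then h.cfc Real.log else 0

/-- `Tr(ρ log ρ) := ∑ᵢ λᵢ log λᵢ` for a real symmetric matrix `ρ` with eigenvalues `λᵢ`,
with the convention `0 · log 0 = 0` (note `Real.log 0 = 0`). Junk value `0` for
non-Hermitian input. -/
noncomputable def trMatrixLogSelf {n : ℕ} (ρ : Matrix (Fin n) (Fin n) ℝ) : ℝ :=
  if h : ρ.IsHermitian then ∑ i, h.eigenvalues i * Real.log (h.eigenvalues i) else 0

/-! Diagonalise `ρ = ∑ λᵢ uᵢuᵢᵀ` and `σ = ∑ μⱼ vⱼvⱼᵀ`. The squared overlaps `Pᵢⱼ = ⟨uᵢ, vⱼ⟩²` form a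
doubly stochastic matrix, so
`D(ρ‖σ) = ∑ᵢⱼ Pᵢⱼ (λᵢ log λᵢ - λᵢ log μⱼ) = Tr ρ - Tr σ + ∑ᵢⱼ Pᵢⱼ μⱼ klFun (λᵢ / μⱼ)`,
where `klFun x = x log x + 1 - x` is nonnegative and vanishes only at `x = 1`. Hence `D ≥ 0`, and
`D = 0` iff `λᵢ = μⱼ` whenever `⟨uᵢ, vⱼ⟩ ≠ 0`, i.e. iff `diag λ · UᵀV = UᵀV · diag μ`, i.e. iff
`ρ = σ`. -/

open InformationTheory

lemma mul_log_sub_mul_log_eq_sub_add_mul_klFun (x : ℝ) {y : ℝ} (hy : y ≠ 0) :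
    x * Real.log x - x * Real.log y = x - y + y * klFun (x / y) := by
  rcases eq_or_ne x 0 with rfl | hx
  · simp [klFun_zero]
  · rw [klFun_apply, Real.log_div hx hy]
    field_simp
    ring

lemma mul_klFun_div_nonneg {x y : ℝ} (hx : 0 ≤ x) (hy : 0 < y) : 0 ≤ y * klFun (x / y) :=
  mul_nonneg hy.le (klFun_nonneg (div_nonneg hx hy.le))

lemma mul_klFun_div_eq_zero_iff {x y : ℝ} (hx : 0 ≤ x) (hy : 0 < y) :
    y * klFun (x / y) = 0 ↔ x = y := by
  rw [mul_eq_zero, klFun_eq_zero_iff (div_nonneg hx hy.le), div_eq_one_iff_eq hy.ne']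
  simp [hy.ne']

section

variable {ι : Type*} [Fintype ι] [DecidableEq ι]

lemma sum_sum_mul_sub_of_mem_doublyStochastic {P : Matrix ι ι ℝ}
    (hP : P ∈ doublyStochastic ℝ ι) (a b : ι → ℝ) :
    ∑ i, ∑ j, P i j * (a i - b j) = ∑ i, a i - ∑ j, b j := by
  simp only [mul_sub, Finset.sum_sub_distrib]
  rw [Finset.sum_comm (f := fun i j => P i j * b j)]
  simp only [← Finset.sum_mul, sum_row_of_mem_doublyStochastic hP,
    sum_col_of_mem_doublyStochastic hP, one_mul]

lemma map_sq_mem_doublyStochastic_of_mem_unitaryGroup {W : Matrix ι ι ℝ}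
    (hW : W ∈ unitaryGroup ι ℝ) : W.map (· ^ 2) ∈ doublyStochastic ℝ ι := by
  have hrow := congrFun₂ (mem_unitaryGroup_iff.mp hW)
  have hcol := congrFun₂ (mem_unitaryGroup_iff'.mp hW)
  refine mem_doublyStochastic_iff_sum.mpr ⟨fun i j => sq_nonneg _, fun i => ?_, fun j => ?_⟩
  · simpa [mul_apply, sq] using hrow i i
  · simpa [mul_apply, sq] using hcol j j

lemma trace_diagonal_mul_mul_diagonal_mul_transpose (d e : ι → ℝ) (M : Matrix ι ι ℝ) :
    (diagonal d * M * diagonal e * Mᵀ).trace = ∑ i, ∑ j, d i * M i j ^ 2 * e j := by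
  simp only [trace, diag, mul_apply (M := diagonal d * M * diagonal e), mul_diagonal, diagonal_mul,
    transpose_apply]
  exact Finset.sum_congr rfl fun i _ => Finset.sum_congr rfl fun j _ => by ring


namespace Matrix.IsHermitian

variable {A B : Matrix ι ι ℝ} (hA : A.IsHermitian) (hB : B.IsHermitian)

lemma star_eigenvectorUnitary_eq_transpose :
    star (hA.eigenvectorUnitary : Matrix ι ι ℝ) = (hA.eigenvectorUnitary : Matrix ι ι ℝ)ᵀ := by
  rw [star_eq_conjTranspose, conjTranspose_eq_transpose_of_trivial]

lemma cfc_eq_mul_diagonal_mul_transpose (f : ℝ → ℝ) :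
    hA.cfc f = hA.eigenvectorUnitary * diagonal (f ∘ hA.eigenvalues) *
      (hA.eigenvectorUnitary : Matrix ι ι ℝ)ᵀ := by
  rw [IsHermitian.cfc, Unitary.conjStarAlgAut_apply, RCLike.ofReal_real_eq_id,
    star_eigenvectorUnitary_eq_transpose]
  rfl

lemma eq_mul_diagonal_mul_transpose :
    A = hA.eigenvectorUnitary * diagonal hA.eigenvalues *
      (hA.eigenvectorUnitary : Matrix ι ι ℝ)ᵀ := by
  conv_lhs => rw [hA.spectral_theorem]
  rw [Unitary.conjStarAlgAut_apply, RCLike.ofReal_real_eq_id,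
    star_eigenvectorUnitary_eq_transpose]
  rfl

noncomputable def eigenvectorOverlap : Matrix ι ι ℝ :=
  (hA.eigenvectorUnitary : Matrix ι ι ℝ)ᵀ * hB.eigenvectorUnitary

lemma eigenvectorOverlap_mem_unitaryGroup : hA.eigenvectorOverlap hB ∈ unitaryGroup ι ℝ := by
  rw [eigenvectorOverlap, ← star_eigenvectorUnitary_eq_transpose]
  exact (star hA.eigenvectorUnitary * hB.eigenvectorUnitary).prop

lemma trace_mul_cfc (f : ℝ → ℝ) :
    (A * hB.cfc f).trace =
      ∑ i, ∑ j, hA.eigenvalues i * hA.eigenvectorOverlap hB i j ^ 2 * f (hB.eigenvalues j) := by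
  set U : Matrix ι ι ℝ := ↑hA.eigenvectorUnitary
  set V : Matrix ι ι ℝ := ↑hB.eigenvectorUnitary
  have hW : hA.eigenvectorOverlap hB = Uᵀ * V := rfl
  have hAB : A * hB.cfc f =
      U * (diagonal hA.eigenvalues * (Uᵀ * V) * diagonal (f ∘ hB.eigenvalues) * Vᵀ) := by
    conv_lhs => rw [cfc_eq_mul_diagonal_mul_transpose, hA.eq_mul_diagonal_mul_transpose]
    simp only [U, V, Matrix.mul_assoc]
  rw [hAB, trace_mul_comm, Matrix.mul_assoc _ Vᵀ, ← transpose_transpose U, ← transpose_mul,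
    transpose_transpose, ← hW, trace_diagonal_mul_mul_diagonal_mul_transpose]
  rfl

lemma transpose_eigenvectorUnitary_mul_self :
    (hA.eigenvectorUnitary : Matrix ι ι ℝ)ᵀ * hA.eigenvectorUnitary = 1 := by
  rw [← star_eigenvectorUnitary_eq_transpose, Unitary.coe_star_mul_self]

lemma eigenvectorUnitary_mul_transpose_self :
    (hA.eigenvectorUnitary : Matrix ι ι ℝ) * (hA.eigenvectorUnitary : Matrix ι ι ℝ)ᵀ = 1 := by
  rw [← star_eigenvectorUnitary_eq_transpose]
  exact Unitary.coe_mul_star_self _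

lemma eq_iff_forall_eigenvectorOverlap_ne_zero :
    A = B ↔ ∀ i j, hA.eigenvectorOverlap hB i j ≠ 0 → hA.eigenvalues i = hB.eigenvalues j := by
  set U : Matrix ι ι ℝ := ↑hA.eigenvectorUnitary
  set V : Matrix ι ι ℝ := ↑hB.eigenvectorUnitary
  set W := hA.eigenvectorOverlap hB
  have hA' : Uᵀ * A * V = diagonal hA.eigenvalues * W := by
    conv_lhs => rw [hA.eq_mul_diagonal_mul_transpose]
    simp only [W, eigenvectorOverlap, U, V, ← Matrix.mul_assoc,
      transpose_eigenvectorUnitary_mul_self, Matrix.one_mul]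
  have hB' : Uᵀ * B * V = W * diagonal hB.eigenvalues := by
    conv_lhs => rw [hB.eq_mul_diagonal_mul_transpose]
    simp only [W, eigenvectorOverlap, U, V, Matrix.mul_assoc,
      transpose_eigenvectorUnitary_mul_self, Matrix.mul_one]
  have hconj : ∀ X : Matrix ι ι ℝ, U * (Uᵀ * X * V) * Vᵀ = X := fun X => by
    simp only [U, V, Matrix.mul_assoc, eigenvectorUnitary_mul_transpose_self, Matrix.mul_one,
      ← Matrix.mul_assoc _ Uᵀ, Matrix.one_mul]
  calc A = B ↔ diagonal hA.eigenvalues * W = W * diagonal hB.eigenvalues := by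
        rw [← hA', ← hB']
        exact ⟨fun h => h ▸ rfl, fun h => by rw [← hconj A, h, hconj]⟩
    _ ↔ ∀ i j, hA.eigenvalues i * W i j = W i j * hB.eigenvalues j := by
        simp only [← Matrix.ext_iff, diagonal_mul, mul_diagonal]
    _ ↔ _ := forall₂_congr fun i j => by
        rw [mul_comm, mul_eq_mul_left_iff, or_iff_not_imp_right]

end Matrix.IsHermitian

end

lemma trMatrixLogSelf_sub_trace_mul_matLog {n : ℕ} {ρ σ : Matrix (Fin n) (Fin n) ℝ}
    (hρ : ρ.IsHermitian) (hσ : σ.PosDef) :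
    trMatrixLogSelf ρ - (ρ * matLog σ).trace = ρ.trace - σ.trace +
      ∑ i, ∑ j, hρ.eigenvectorOverlap hσ.1 i j ^ 2 *
        (hσ.1.eigenvalues j * klFun (hρ.eigenvalues i / hσ.1.eigenvalues j)) := by
  rw [trMatrixLogSelf, dif_pos hρ, matLog, dif_pos hσ.1, hρ.trace_mul_cfc,
    hρ.trace_eq_sum_eigenvalues, hσ.1.trace_eq_sum_eigenvalues]
  simp only [RCLike.ofReal_real_eq_id, id_eq]
  set l := hρ.eigenvalues
  set m := hσ.1.eigenvalues
  set W := hρ.eigenvectorOverlap hσ.1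
  have hP : W.map (· ^ 2) ∈ doublyStochastic ℝ (Fin n) :=
    map_sq_mem_doublyStochastic_of_mem_unitaryGroup (hρ.eigenvectorOverlap_mem_unitaryGroup hσ.1)
  have hrow (i : Fin n) : ∑ j, W i j ^ 2 = 1 := by
    simpa only [map_apply] using sum_row_of_mem_doublyStochastic hP i
  have hm : ∀ j, m j ≠ 0 := fun j => (hσ.eigenvalues_pos j).ne'
  calc _ = ∑ i, ∑ j, W i j ^ 2 * (l i * Real.log (l i) - l i * Real.log (m j)) := by
        rw [← Finset.sum_sub_distrib]
        refine Finset.sum_congr rfl fun i _ => ?_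
        simp only [mul_sub, Finset.sum_sub_distrib, ← Finset.sum_mul, hrow, one_mul]
        congr 1
        exact Finset.sum_congr rfl fun j _ => by ring
    _ = ∑ i, ∑ j, (W i j ^ 2 * (l i - m j) + W i j ^ 2 * (m j * klFun (l i / m j))) := by
        simp only [mul_log_sub_mul_log_eq_sub_add_mul_klFun _ (hm _), mul_add]
    _ = _ := by
        simpa only [Finset.sum_add_distrib, map_apply] using
          congrArg (· + _) (sum_sum_mul_sub_of_mem_doublyStochastic hP l m)

/-- Klein's inequality: for density matrices ρ, σ with σ positive definite,
the quantum relative entropy D(ρ‖σ) := Tr(ρ log ρ) − Tr(ρ log σ) is nonnegative, with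
equality iff ρ = σ. -/
theorem klein_inequality {n : ℕ} (ρ σ : Matrix (Fin n) (Fin n) ℝ)
    (hρ : ρ.PosSemidef) (hρtr : ρ.trace = 1)
    (hσ : σ.PosDef) (hσtr : σ.trace = 1) :
    0 ≤ trMatrixLogSelf ρ - (ρ * matLog σ).trace ∧
    (trMatrixLogSelf ρ - (ρ * matLog σ).trace = 0 ↔ ρ = σ) := by
  rw [trMatrixLogSelf_sub_trace_mul_matLog hρ.1 hσ, hρtr, hσtr, sub_self, zero_add,
    hρ.1.eq_iff_forall_eigenvectorOverlap_ne_zero hσ.1]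
  set W := hρ.1.eigenvectorOverlap hσ.1
  set l := hρ.1.eigenvalues
  set m := hσ.1.eigenvalues
  have hterm_nonneg (i j : Fin n) : 0 ≤ W i j ^ 2 * (m j * klFun (l i / m j)) :=
    mul_nonneg (sq_nonneg _)
      (mul_klFun_div_nonneg (hρ.eigenvalues_nonneg i) (hσ.eigenvalues_pos j))
  have hterm_eq_zero (i j : Fin n) :
      W i j ^ 2 * (m j * klFun (l i / m j)) = 0 ↔ (W i j ≠ 0 → l i = m j) := by
    rw [mul_eq_zero, mul_klFun_div_eq_zero_iff (hρ.eigenvalues_nonneg i) (hσ.eigenvalues_pos j),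
      pow_eq_zero_iff two_ne_zero, or_iff_not_imp_left]
  refine ⟨Finset.sum_nonneg fun i _ => Finset.sum_nonneg fun j _ => hterm_nonneg i j, ?_⟩
  rw [Finset.sum_eq_zero_iff_of_nonneg fun i _ => Finset.sum_nonneg fun j _ => hterm_nonneg i j]
  simp only [Finset.sum_eq_zero_iff_of_nonneg fun j _ => hterm_nonneg _ j, Finset.mem_univ,
    true_imp_iff, hterm_eq_zero]
end

section
/- Let ρ be a fixed n×n real symmetric positive semidefinite matrix. Then the function σ ↦ −Tr(ρ log σ) is convex on the set of n×n real symmetric positive definite matrices; that is, for positive definite σ₀, σ₁ and t ∈ [0,1], −Tr(ρ log(tσ₀ + (1−t)σ₁)) ≤ −t·Tr(ρ log σ₀) − (1−t)·Tr(ρ log σ₁). -/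
/-!
The matrix logarithm is operator concave: `t log σ₀ + (1 - t) log σ₁ ≤ log (t σ₀ + (1 - t) σ₁)`
in the Loewner order. This holds for strictly positive elements of any C⋆-algebra
(`CFC.concaveOn_log`); real matrices are not one, so we pass to complex matrices through the
entrywise embedding, a star algebra homomorphism that commutes with the functional calculus and
reflects the Loewner order. Pairing with `ρ ⪰ 0` preserves the order, since `Tr (ρ X) ≥ 0` for
`X ⪰ 0` (write `ρ = s⋆ s`, so that `Tr (ρ X) = Tr (s X s⋆)`).
-/

open Matrix

open scoped MatrixOrder ComplexOrder Matrix.Norms.L2Operator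

lemma IsStrictlyPositive.map {R S F : Type*} [Ring R] [StarRing R] [PartialOrder R]
    [StarOrderedRing R] [Ring S] [StarRing S] [PartialOrder S] [StarOrderedRing S]
    [FunLike F R S] [RingHomClass F R S] [NonUnitalStarRingHomClass F R S] (f : F) {a : R}
    (ha : IsStrictlyPositive a) : IsStrictlyPositive (f a) :=
  (ha.isUnit.map f).isStrictlyPositive (map_nonneg f ha.nonneg)

namespace Matrix

lemma convex_setOf_posDef {n : Type*} [Fintype n] :
    Convex ℝ {A : Matrix n n ℝ | A.PosDef} :=
  convex_iff_forall_pos.2 fun _ hA _ hB _ _ ha hb _ => (hA.smul ha).add (hB.smul hb)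

variable {n : Type*} [Fintype n] [DecidableEq n]

lemma PosSemidef.trace_mul_nonneg {𝕜 : Type*} [RCLike 𝕜] {A B : Matrix n n 𝕜}
    (hA : A.PosSemidef) (hB : B.PosSemidef) : 0 ≤ (A * B).trace := by
  obtain ⟨s, rfl⟩ := CStarAlgebra.nonneg_iff_eq_star_mul_self.mp hA.nonneg
  rw [Matrix.mul_assoc, trace_mul_comm]
  exact (hB.mul_mul_conjTranspose_same s).trace_nonneg

lemma PosSemidef.monotone_trace_mul {𝕜 : Type*} [RCLike 𝕜] {A : Matrix n n 𝕜}
    (hA : A.PosSemidef) : Monotone fun X => (A * X).trace := fun X Y hXY => by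
  simpa [Matrix.mul_sub] using hA.trace_mul_nonneg (le_iff.1 hXY)

variable (n) in
noncomputable def complexify : Matrix n n ℝ →⋆ₐ[ℝ] Matrix n n ℂ :=
  { Complex.ofRealAm.mapMatrix with map_star' := fun A => by ext; simp }

lemma complexify_apply (A : Matrix n n ℝ) : complexify n A = A.map (↑) := rfl

lemma complexify_injective : Function.Injective (complexify n) :=
  map_injective Complex.ofReal_injective

lemma posSemidef_complexify_iff {A : Matrix n n ℝ} :
    (complexify n A).PosSemidef ↔ A.PosSemidef := by
  refine ⟨fun h => .of_dotProduct_mulVec_nonneg ?_ fun x => ?_, fun h => ?_⟩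
  · exact complexify_injective ((map_star (complexify n) A).trans h.isHermitian)
  · have hcast : star (fun i => (x i : ℂ)) ⬝ᵥ complexify n A *ᵥ (fun i => (x i : ℂ)) =
        ((star x ⬝ᵥ A *ᵥ x : ℝ) : ℂ) := by
      simp [dotProduct, mulVec, complexify_apply]
    exact Complex.zero_le_real.1 (hcast ▸ h.dotProduct_mulVec_nonneg _)
  · simpa using (map_nonneg (complexify n) h.nonneg).posSemidef

lemma complexify_le_complexify_iff {A B : Matrix n n ℝ} :
    complexify n A ≤ complexify n B ↔ A ≤ B := by
  rw [le_iff, le_iff, ← map_sub, posSemidef_complexify_iff]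

end Matrix

section MatLog

variable {m : ℕ}

lemma matLog_eq_cfc {A : Matrix (Fin m) (Fin m) ℝ} (hA : A.IsHermitian) :
    matLog A = cfc Real.log A := by
  rw [matLog, dif_pos hA, hA.cfc_eq]

lemma complexify_matLog {A : Matrix (Fin m) (Fin m) ℝ} (hA : A.PosDef) :
    complexify (Fin m) (matLog A) = CFC.log (complexify (Fin m) A) := by
  rw [matLog_eq_cfc hA.isHermitian, CFC.log]
  refine StarAlgHom.map_cfc _ _ _ ?_ ?_ hA.isHermitian.isSelfAdjoint ?_
  · exact Real.continuousOn_log.mono fun x hx => (hA.isStrictlyPositive.spectrum_pos hx).ne'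
  · exact continuous_id.matrix_map Complex.continuous_ofReal
  · exact hA.isHermitian.isSelfAdjoint.map _

lemma concaveOn_matLog : ConcaveOn ℝ {A : Matrix (Fin m) (Fin m) ℝ | A.PosDef} matLog := by
  refine ⟨convex_setOf_posDef, fun A hA B hB a b ha hb hab => ?_⟩
  rw [← complexify_le_complexify_iff, map_add, map_smul, map_smul, complexify_matLog hA,
    complexify_matLog hB, complexify_matLog (convex_setOf_posDef hA hB ha hb hab), map_add,
    map_smul, map_smul]
  exact CFC.concaveOn_log.2 (IsStrictlyPositive.map _ hA.isStrictlyPositive)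
    (IsStrictlyPositive.map _ hB.isStrictlyPositive) ha hb hab

lemma concaveOn_trace_mul_matLog {ρ : Matrix (Fin m) (Fin m) ℝ} (hρ : ρ.PosSemidef) :
    ConcaveOn ℝ {A : Matrix (Fin m) (Fin m) ℝ | A.PosDef} fun A => (ρ * matLog A).trace :=
  ⟨convex_setOf_posDef, fun _ hA _ hB _ _ ha hb hab => by
    simpa [Matrix.mul_add, trace_add] using
      hρ.monotone_trace_mul (concaveOn_matLog.2 hA hB ha hb hab)⟩

end MatLog

/-- for a fixed real symmetric positive semidefinite ρ, the map
σ ↦ −Tr(ρ log σ) is convex on the positive definite matrices: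
for positive definite σ₀, σ₁ and t ∈ [0,1],
−Tr(ρ log(tσ₀ + (1−t)σ₁)) ≤ −t·Tr(ρ log σ₀) − (1−t)·Tr(ρ log σ₁). -/
theorem neg_trace_log_convex {n : ℕ} (ρ : Matrix (Fin n) (Fin n) ℝ)
    (hρ : ρ.PosSemidef)
    (σ₀ σ₁ : Matrix (Fin n) (Fin n) ℝ) (hσ₀ : σ₀.PosDef) (hσ₁ : σ₁.PosDef)
    (t : ℝ) (ht : t ∈ Set.Icc (0:ℝ) 1) :
    -(ρ * matLog (t • σ₀ + (1 - t) • σ₁)).trace ≤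
      -(t * (ρ * matLog σ₀).trace) - (1 - t) * (ρ * matLog σ₁).trace := by
  have h := (concaveOn_trace_mul_matLog hρ).2 hσ₀ hσ₁ ht.1 (sub_nonneg.2 ht.2) (by ring)
  simp only [smul_eq_mul] at h
  linarith
end

section
/- Fix ε ∈ (0, 1/n) and let D_{n,ε} be the set of n×n density matrices ρ with ρ − εI positive semidefinite. Let Γ ⊆ D_{n,ε} be nonempty, convex, and compact. Then for the quantum log loss L_log(ρ,σ) := −Tr(ρ log σ): (i) inf_{σ ∈ D_{n,ε}} sup_{ρ ∈ Γ} L_log(ρ,σ) = sup_{ρ ∈ Γ} inf_{σ ∈ D_{n,ε}} L_log(ρ,σ) = sup_{ρ ∈ Γ} S(ρ); and (ii) there exists a saddle point (ρ*, σ*) ∈ Γ × D_{n,ε} of L_log such that ρ* maximizes the von Neumann entropy S over Γ and S(ρ*) equals the minimax value. -/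
open Matrix

/-- The von Neumann entropy `S(ρ) := −∑ᵢ λᵢ log λᵢ` of a real symmetric matrix `ρ` with
eigenvalues `λᵢ`, with the convention `0 · log 0 = 0` (note `Real.log 0 = 0`). Junk value
`0` for non-Hermitian input. -/
noncomputable def vnEntropy {n : ℕ} (ρ : Matrix (Fin n) (Fin n) ℝ) : ℝ :=
  if h : ρ.IsHermitian then -∑ i, h.eigenvalues i * Real.log (h.eigenvalues i) else 0

/-- `D_{n,ε}`: the set of n×n density matrices ρ (real symmetric PSD, trace 1) with
ρ − εI positive semidefinite. -/
def Dset (n : ℕ) (ε : ℝ) : Set (Matrix (Fin n) (Fin n) ℝ) :=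
  {ρ | ρ.PosSemidef ∧ ρ.trace = 1 ∧ (ρ - ε • 1).PosSemidef}

/-!
Write `ρ = ∑ λᵢ uᵢuᵢᵀ` and `σ = ∑ μⱼ vⱼvⱼᵀ`. Then `Tr(ρ log σ) = ∑ᵢⱼ λᵢ log μⱼ ⟪uᵢ, vⱼ⟫²`, and
the weights `⟪uᵢ, vⱼ⟫²` form a doubly stochastic matrix, so the scalar inequality
`λ (log λ - log μ) ≥ λ - μ` gives Klein's inequality `S(ρ) ≤ -Tr(ρ log σ)` for states of equal
trace, with equality at `σ = ρ`. Hence `inf_σ L(ρ, σ) = S(ρ)`.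

The entropy is continuous on `D_{n,ε}` (the logarithm is continuous on `[ε, 1]`), so it attains its
maximum on `Γ` at some `ρ*`. For `ρ ∈ Γ` put `ρₜ = ρ* + t (ρ - ρ*) ∈ Γ`; maximality and Klein's
inequality give `t Tr((ρ - ρ*) log ρₜ) ≥ 0`, and letting `t → 0` gives `L(ρ, ρ*) ≤ L(ρ*, ρ*)`.
Thus `(ρ*, ρ*)` is a saddle point of `L`, which forces `inf sup L = sup inf L = L(ρ*, ρ*) = S(ρ*)`.
-/

section TracePairing

variable {ι : Type*} [Fintype ι] [DecidableEq ι] {A B : Matrix ι ι ℝ}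

lemma Matrix.IsHermitian.cfc_eq_mul_diagonal_mul (hA : A.IsHermitian) (f : ℝ → ℝ) :
    hA.cfc f = (hA.eigenvectorUnitary : Matrix ι ι ℝ) * diagonal (f ∘ hA.eigenvalues) *
      star (hA.eigenvectorUnitary : Matrix ι ι ℝ) := by
  simp [IsHermitian.cfc, Unitary.conjStarAlgAut_apply, RCLike.ofReal_real_eq_id]

lemma sum_sq_apply_right_of_mem_unitary {U : Matrix ι ι ℝ} (hU : U ∈ unitary (Matrix ι ι ℝ))
    (i : ι) : ∑ j, U i j ^ 2 = 1 := by
  simpa [mul_apply, sq] using congr($(Unitary.mul_star_self_of_mem hU) i i)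

lemma sum_sq_apply_left_of_mem_unitary {U : Matrix ι ι ℝ} (hU : U ∈ unitary (Matrix ι ι ℝ))
    (j : ι) : ∑ i, U i j ^ 2 = 1 := by
  simpa [mul_apply, sq] using congr($(Unitary.star_mul_self_of_mem hU) j j)

noncomputable def eigenOverlap (hA : A.IsHermitian) (hB : B.IsHermitian) : Matrix ι ι ℝ :=
  star (hA.eigenvectorUnitary : Matrix ι ι ℝ) * hB.eigenvectorUnitary

lemma eigenOverlap_mem_unitary (hA : A.IsHermitian) (hB : B.IsHermitian) :
    eigenOverlap hA hB ∈ unitary (Matrix ι ι ℝ) :=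
  Submonoid.mul_mem _ (Unitary.star_mem (SetLike.coe_mem _)) (SetLike.coe_mem _)

lemma trace_diagonal_mul_mul_diagonal_mul_star (d e : ι → ℝ) (W : Matrix ι ι ℝ) :
    (diagonal d * W * diagonal e * star W).trace = ∑ i, ∑ j, d i * e j * W i j ^ 2 := by
  simp only [trace, diag, mul_apply (M := diagonal d * W * diagonal e), mul_diagonal, diagonal_mul,
    star_apply, star_trivial]
  exact Finset.sum_congr rfl fun i _ => Finset.sum_congr rfl fun j _ => by ring

lemma trace_cfc_mul_cfc (hA : A.IsHermitian) (hB : B.IsHermitian) (f g : ℝ → ℝ) :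
    (hA.cfc f * hB.cfc g).trace =
      ∑ i, ∑ j, f (hA.eigenvalues i) * g (hB.eigenvalues j) * eigenOverlap hA hB i j ^ 2 := by
  set U := (hA.eigenvectorUnitary : Matrix ι ι ℝ)
  set V := (hB.eigenvectorUnitary : Matrix ι ι ℝ)
  set D := diagonal (f ∘ hA.eigenvalues)
  set E := diagonal (g ∘ hB.eigenvalues)
  calc (hA.cfc f * hB.cfc g).trace = (U * (D * eigenOverlap hA hB * E * star V)).trace := by
        rw [hA.cfc_eq_mul_diagonal_mul, hB.cfc_eq_mul_diagonal_mul, eigenOverlap]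
        simp only [U, V, D, E, mul_assoc]
    _ = (D * eigenOverlap hA hB * E * star (eigenOverlap hA hB)).trace := by
        rw [trace_mul_comm, eigenOverlap, star_mul, star_star]
        simp only [U, V, mul_assoc]
    _ = _ := trace_diagonal_mul_mul_diagonal_mul_star _ _ _

lemma trace_cfc (hA : A.IsHermitian) (f : ℝ → ℝ) :
    (hA.cfc f).trace = ∑ i, f (hA.eigenvalues i) := by
  rw [hA.cfc_eq_mul_diagonal_mul, trace_mul_cycle,
    Unitary.star_mul_self_of_mem (SetLike.coe_mem _), one_mul, trace_diagonal]
  rfl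

lemma Matrix.IsHermitian.cfc_id (hA : A.IsHermitian) : hA.cfc id = A := by
  rw [← hA.cfc_eq]
  exact _root_.cfc_id ℝ A hA.isSelfAdjoint

end TracePairing

section DensityMatrices

variable {n : ℕ} {ε : ℝ} {ρ σ : Matrix (Fin n) (Fin n) ℝ}

lemma matLog_eq_cfc_s7 (hσ : σ.IsHermitian) : matLog σ = hσ.cfc Real.log := dif_pos hσ

lemma trace_mul_matLog (hρ : ρ.IsHermitian) (hσ : σ.IsHermitian) :
    (ρ * matLog σ).trace = ∑ i, ∑ j,
      hρ.eigenvalues i * Real.log (hσ.eigenvalues j) * eigenOverlap hρ hσ i j ^ 2 := by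
  rw [matLog_eq_cfc_s7 hσ]
  conv_lhs => rw [← hρ.cfc_id]
  exact trace_cfc_mul_cfc hρ hσ id Real.log

lemma vnEntropy_eq_neg_trace_mul_matLog (hρ : ρ.IsHermitian) :
    vnEntropy ρ = -(ρ * matLog ρ).trace := by
  have hfin : (spectrum ℝ ρ).Finite := finite_real_spectrum
  have : ρ * matLog ρ = hρ.cfc (fun x => x * Real.log x) := by
    rw [matLog_eq_cfc_s7 hρ, ← hρ.cfc_eq, ← hρ.cfc_eq,
      cfc_mul _ _ ρ (hfin.continuousOn _) (hfin.continuousOn _), cfc_id' ℝ ρ hρ.isSelfAdjoint]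
  rw [this, trace_cfc, vnEntropy, dif_pos hρ]

lemma sub_le_mul_sub_log {x y : ℝ} (hx : 0 ≤ x) (hy : 0 < y) :
    x - y ≤ x * (Real.log x - Real.log y) := by
  rcases hx.eq_or_lt with rfl | hx
  · simpa using hy.le
  have := Real.one_sub_inv_le_log_of_pos (div_pos hx hy)
  rw [Real.log_div hx.ne' hy.ne', inv_div] at this
  calc x - y = x * (1 - y / x) := by field_simp
    _ ≤ _ := mul_le_mul_of_nonneg_left this hx.le

theorem vnEntropy_le_neg_trace_mul_matLog (hρ : ρ.PosSemidef) (hσ : σ.PosDef)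
    (htr : ρ.trace = σ.trace) : vnEntropy ρ ≤ -(ρ * matLog σ).trace := by
  set lam := hρ.1.eigenvalues
  set μ := hσ.1.eigenvalues
  set c : Fin n → Fin n → ℝ := fun i j => eigenOverlap hρ.1 hσ.1 i j ^ 2
  have hrow : ∀ i, ∑ j, c i j = 1 :=
    sum_sq_apply_right_of_mem_unitary (eigenOverlap_mem_unitary hρ.1 hσ.1)
  have hcol : ∀ j, ∑ i, c i j = 1 :=
    sum_sq_apply_left_of_mem_unitary (eigenOverlap_mem_unitary hρ.1 hσ.1)
  have hgap : 0 ≤ ∑ i, ∑ j, c i j * (lam i * (Real.log (lam i) - Real.log (μ j))) :=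
    calc (0 : ℝ) = ∑ i, lam i - ∑ j, μ j := by
          simp only [hρ.1.trace_eq_sum_eigenvalues, hσ.1.trace_eq_sum_eigenvalues,
            RCLike.ofReal_real_eq_id, id] at htr
          rw [htr, sub_self]
      _ = ∑ i, ∑ j, c i j * (lam i - μ j) := by
          simp only [mul_sub, Finset.sum_sub_distrib, ← Finset.sum_mul, hrow, one_mul]
          rw [Finset.sum_comm]
          simp only [← Finset.sum_mul, hcol, one_mul]
      _ ≤ _ := by
          gcongr with i _ j _
          exact sub_le_mul_sub_log (hρ.eigenvalues_nonneg i) (hσ.eigenvalues_pos j)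
  have hsplit : ∑ i, ∑ j, c i j * (lam i * (Real.log (lam i) - Real.log (μ j))) =
      ∑ i, lam i * Real.log (lam i) - ∑ i, ∑ j, lam i * Real.log (μ j) * c i j := by
    rw [← Finset.sum_sub_distrib]
    refine Finset.sum_congr rfl fun i _ => ?_
    rw [← mul_one (lam i * Real.log (lam i)), ← hrow i, Finset.mul_sum, ← Finset.sum_sub_distrib]
    exact Finset.sum_congr rfl fun j _ => by ring
  rw [vnEntropy, dif_pos hρ.1, trace_mul_matLog hρ.1 hσ.1]
  linarith

open scoped Matrix.Norms.L2Operator in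
theorem continuousOn_matLog {K : Set ℝ} (hK : IsCompact K) (hK0 : 0 ∉ K) :
    ContinuousOn (matLog (n := n)) {A | A.IsHermitian ∧ spectrum ℝ A ⊆ K} := by
  refine (continuousOn_cfc (Matrix (Fin n) (Fin n) ℝ) hK Real.log
    (Real.continuousOn_log.mono fun x hx h => hK0 (h ▸ hx))).congr fun A ⟨hA, _⟩ => ?_
  rw [matLog_eq_cfc_s7 hA, IsHermitian.cfc_eq hA]

open scoped MatrixOrder in
lemma spectrum_subset_Icc_of_mem_Dset (hρ : ρ ∈ Dset n ε) : spectrum ℝ ρ ⊆ Set.Icc ε 1 := by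
  obtain ⟨hpsd, htr, hgap⟩ := hρ
  intro x hx
  refine ⟨(algebraMap_le_iff_le_spectrum (a := ρ) hpsd.1.isSelfAdjoint).1 ?_ x hx, ?_⟩
  · rwa [Algebra.algebraMap_eq_smul_one, Matrix.le_iff]
  · obtain ⟨i, rfl⟩ := hpsd.1.spectrum_real_eq_range_eigenvalues ▸ hx
    calc hpsd.1.eigenvalues i ≤ ∑ j, hpsd.1.eigenvalues j :=
          Finset.single_le_sum (fun j _ => hpsd.eigenvalues_nonneg j) (Finset.mem_univ i)
      _ = 1 := by simpa [hpsd.1.trace_eq_sum_eigenvalues] using htr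

lemma posDef_of_mem_Dset (hε : 0 < ε) (hρ : ρ ∈ Dset n ε) : ρ.PosDef := by
  simpa using PosDef.posSemidef_add hρ.2.2 (PosDef.one.smul hε)

lemma continuousOn_matLog_Dset (hε : 0 < ε) : ContinuousOn (matLog (n := n)) (Dset n ε) :=
  (continuousOn_matLog isCompact_Icc fun h => hε.not_ge h.1).mono fun _ hρ =>
    ⟨hρ.1.1, spectrum_subset_Icc_of_mem_Dset hρ⟩

lemma continuousOn_vnEntropy_Dset (hε : 0 < ε) : ContinuousOn (vnEntropy (n := n)) (Dset n ε) := by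
  refine (continuous_id.matrix_trace.neg.comp_continuousOn
    (continuousOn_id.mul (continuousOn_matLog_Dset hε))).congr
    fun ρ hρ => vnEntropy_eq_neg_trace_mul_matLog hρ.1.1

theorem isLeast_neg_trace_mul_matLog_Dset (hε : 0 < ε) (hρ : ρ ∈ Dset n ε) :
    IsLeast (Set.range fun σ : Dset n ε => -(ρ * matLog (σ : Matrix (Fin n) (Fin n) ℝ)).trace)
      (vnEntropy ρ) := by
  refine ⟨⟨⟨ρ, hρ⟩, ?_⟩, ?_⟩
  · exact (vnEntropy_eq_neg_trace_mul_matLog hρ.1.1).symm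
  · rintro _ ⟨σ, rfl⟩
    exact vnEntropy_le_neg_trace_mul_matLog hρ.1 (posDef_of_mem_Dset hε σ.2)
      (by rw [hρ.2.1, σ.2.2.1])

theorem neg_trace_mul_matLog_le_of_isMaxOn (hε : 0 < ε)
    {Γ : Set (Matrix (Fin n) (Fin n) ℝ)} (hΓsub : Γ ⊆ Dset n ε) (hΓconv : Convex ℝ Γ)
    {ρs : Matrix (Fin n) (Fin n) ℝ} (hρs : ρs ∈ Γ) (hmax : IsMaxOn vnEntropy Γ ρs)
    (hρ : ρ ∈ Γ) : -(ρ * matLog ρs).trace ≤ -(ρs * matLog ρs).trace := by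
  set path : ℝ → Matrix (Fin n) (Fin n) ℝ := fun t => ρs + t • (ρ - ρs)
  have hpath : ∀ t ∈ Set.Icc (0 : ℝ) 1, path t ∈ Γ := fun t ht =>
    hΓconv.add_smul_sub_mem hρs hρ ht
  set g : ℝ → ℝ := fun t => ((ρ - ρs) * matLog (path t)).trace
  have hg_nonneg : ∀ t ∈ Set.Ioc (0 : ℝ) 1, 0 ≤ g t := by
    intro t ht
    have htΓ := hpath t (Set.Ioc_subset_Icc_self ht)
    have htD := hΓsub htΓ
    have hklein : vnEntropy ρs ≤ -(ρs * matLog (path t)).trace :=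
      vnEntropy_le_neg_trace_mul_matLog (hΓsub hρs).1 (posDef_of_mem_Dset hε htD)
        (by rw [(hΓsub hρs).2.1, htD.2.1])
    have hsplit : vnEntropy (path t) = -(ρs * matLog (path t)).trace - t * g t := by
      rw [vnEntropy_eq_neg_trace_mul_matLog htD.1.1]
      simp only [path, g, add_mul, smul_mul, trace_add, trace_smul, smul_eq_mul]
      ring
    have hle : vnEntropy (path t) ≤ vnEntropy ρs := hmax htΓ
    nlinarith [ht.1]
  have hg_cont : ContinuousOn g (Set.Icc 0 1) :=
    (continuous_const.matrix_mul continuous_id).matrix_trace.comp_continuousOn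
      ((continuousOn_matLog_Dset hε).comp (by fun_prop) fun t ht => hΓsub (hpath t ht))
  have hg0 : 0 ≤ g 0 := by
    have := left_nhdsWithin_Ioc_neBot (zero_lt_one' ℝ)
    exact ge_of_tendsto (((hg_cont 0 ⟨le_rfl, zero_le_one⟩).mono Set.Ioc_subset_Icc_self).tendsto)
      (eventually_nhdsWithin_of_forall hg_nonneg)
  simpa [g, path, sub_mul, trace_sub] using hg0

end DensityMatrices

section Minimax

variable {X Y : Type*} {f : X → Y → ℝ} {x₀ : X} {y₀ : Y}

theorem ciInf_ciSup_eq_of_saddle (hx : ∀ x, f x y₀ ≤ f x₀ y₀) (hy : ∀ y, f x₀ y₀ ≤ f x₀ y)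
    (hbdd : ∀ y, BddAbove (Set.range (f · y))) : ⨅ y, ⨆ x, f x y = f x₀ y₀ := by
  have : Nonempty X := ⟨x₀⟩
  have : Nonempty Y := ⟨y₀⟩
  have hle : ∀ y, f x₀ y₀ ≤ ⨆ x, f x y := fun y => (hy y).trans (le_ciSup (hbdd y) x₀)
  exact le_antisymm ((ciInf_le ⟨_, Set.forall_mem_range.2 hle⟩ y₀).trans (ciSup_le hx))
    (le_ciInf hle)

theorem ciSup_ciInf_eq_of_saddle (hx : ∀ x, f x y₀ ≤ f x₀ y₀) (hy : ∀ y, f x₀ y₀ ≤ f x₀ y)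
    (hbdd : ∀ x, BddBelow (Set.range (f x))) : ⨆ x, ⨅ y, f x y = f x₀ y₀ := by
  have : Nonempty X := ⟨x₀⟩
  have : Nonempty Y := ⟨y₀⟩
  have hle : ∀ x, ⨅ y, f x y ≤ f x₀ y₀ := fun x => (ciInf_le (hbdd x) y₀).trans (hx x)
  exact le_antisymm (ciSup_le hle)
    ((le_ciInf hy).trans (le_ciSup ⟨_, Set.forall_mem_range.2 hle⟩ x₀))

end Minimax

/-- Max-VNE as a minimax equilibrium: for ε ∈ (0, 1/n) and
Γ ⊆ D_{n,ε} nonempty, convex, compact, the quantum log loss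
L_log(ρ,σ) := −Tr(ρ log σ) satisfies:
(i) inf_{σ ∈ D_{n,ε}} sup_{ρ ∈ Γ} L_log = sup_{ρ ∈ Γ} inf_{σ ∈ D_{n,ε}} L_log
    = sup_{ρ ∈ Γ} S(ρ);
(ii) there is a saddle point (ρ*, σ*) ∈ Γ × D_{n,ε} with ρ* maximizing the von Neumann
entropy over Γ and S(ρ*) equal to the minimax value. -/
theorem maxVNE_minimax {n : ℕ} (ε : ℝ) (hε : ε ∈ Set.Ioo 0 (1 / (n : ℝ)))
    (Γ : Set (Matrix (Fin n) (Fin n) ℝ)) (hΓsub : Γ ⊆ Dset n ε)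
    (hΓne : Γ.Nonempty) (hΓconv : Convex ℝ Γ) (hΓcomp : IsCompact Γ) :
    ((⨅ σ : Dset n ε, ⨆ ρ : Γ,
        -((ρ : Matrix (Fin n) (Fin n) ℝ) * matLog (σ : Matrix (Fin n) (Fin n) ℝ)).trace) =
      (⨆ ρ : Γ, ⨅ σ : Dset n ε,
        -((ρ : Matrix (Fin n) (Fin n) ℝ) * matLog (σ : Matrix (Fin n) (Fin n) ℝ)).trace) ∧
     (⨆ ρ : Γ, ⨅ σ : Dset n ε,
        -((ρ : Matrix (Fin n) (Fin n) ℝ) * matLog (σ : Matrix (Fin n) (Fin n) ℝ)).trace) =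
      (⨆ ρ : Γ, vnEntropy (ρ : Matrix (Fin n) (Fin n) ℝ))) ∧
    ∃ ρs ∈ Γ, ∃ σs ∈ Dset n ε,
      (∀ ρ ∈ Γ, -(ρ * matLog σs).trace ≤ -(ρs * matLog σs).trace) ∧
      (∀ σ ∈ Dset n ε, -(ρs * matLog σs).trace ≤ -(ρs * matLog σ).trace) ∧
      (∀ ρ ∈ Γ, vnEntropy ρ ≤ vnEntropy ρs) ∧
      vnEntropy ρs =
        ⨅ σ : Dset n ε, ⨆ ρ : Γ,
          -((ρ : Matrix (Fin n) (Fin n) ℝ) * matLog (σ : Matrix (Fin n) (Fin n) ℝ)).trace := by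
  have hε0 : 0 < ε := hε.1
  obtain ⟨ρs, hρsΓ, hmax⟩ :=
    hΓcomp.exists_isMaxOn hΓne ((continuousOn_vnEntropy_Dset hε0).mono hΓsub)
  have hρsD : ρs ∈ Dset n ε := hΓsub hρsΓ
  have : Nonempty (Dset n ε) := ⟨⟨ρs, hρsD⟩⟩
  have hρs_self : -(ρs * matLog ρs).trace = vnEntropy ρs :=
    (vnEntropy_eq_neg_trace_mul_matLog hρsD.1.1).symm
  have hsaddle_ρ : ∀ ρ ∈ Γ, -(ρ * matLog ρs).trace ≤ -(ρs * matLog ρs).trace := fun _ hρ =>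
    neg_trace_mul_matLog_le_of_isMaxOn hε0 hΓsub hΓconv hρsΓ hmax hρ
  have hsaddle_σ : ∀ σ ∈ Dset n ε, -(ρs * matLog ρs).trace ≤ -(ρs * matLog σ).trace :=
    fun σ hσ => hρs_self ▸ (isLeast_neg_trace_mul_matLog_Dset hε0 hρsD).2 ⟨⟨σ, hσ⟩, rfl⟩
  let L : Γ → Dset n ε → ℝ := fun ρ σ =>
    -((ρ : Matrix (Fin n) (Fin n) ℝ) * matLog (σ : Matrix (Fin n) (Fin n) ℝ)).trace
  have hinfsup := ciInf_ciSup_eq_of_saddle (f := L) (x₀ := ⟨ρs, hρsΓ⟩) (y₀ := ⟨ρs, hρsD⟩)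
    (fun ρ => hsaddle_ρ ρ ρ.2) (fun σ => hsaddle_σ σ σ.2) fun σ => by
      simpa only [Set.image_eq_range] using hΓcomp.bddAbove_image
        (f := fun ρ => -(ρ * matLog (σ : Matrix (Fin n) (Fin n) ℝ)).trace) (by fun_prop)
  have hsupinf := ciSup_ciInf_eq_of_saddle (f := L) (x₀ := ⟨ρs, hρsΓ⟩) (y₀ := ⟨ρs, hρsD⟩)
    (fun ρ => hsaddle_ρ ρ ρ.2) (fun σ => hsaddle_σ σ σ.2) fun ρ =>
      (isLeast_neg_trace_mul_matLog_Dset hε0 (hΓsub ρ.2)).bddBelow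
  exact ⟨⟨hinfsup.trans hsupinf.symm, iSup_congr fun ρ =>
      (isLeast_neg_trace_mul_matLog_Dset hε0 (hΓsub ρ.2)).isGLB.ciInf_eq⟩,
    ρs, hρsΓ, ρs, hρsD, hsaddle_ρ, hsaddle_σ, fun _ hρ => hmax hρ, (hinfsup.trans hρs_self).symm⟩
end
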